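/- (Model 2e3c4m) Define vector fields on ℝ⁴ (coordinates (x,y,u,v)) by e₁ = ∂x + y∂u + 2x∂v, e₂ = ∂y + x∂u, e₃ = x∂x + u∂u + 2v∂v, e₄ = x∂y + v∂u, e₅ = y∂y + u∂u, and let S = {(x, y, xy, x²) : (x,y) ∈ ℝ²}. Then: (i) each of e₁,…,e₅ is tangent to S; (ii) at every point of S the first two components of e₁ and e₂ are the linearly independent vectors (1,0) and (0,1) of ℝ², so S is affinely homogeneous; (iii) with bracket [X,Y](p) = (DY)(p)(X(p)) − (DX)(p)(Y(p)) one has [e₁,e₃] = e₁, [e₁,e₄] = e₂, [e₂,e₅] = e₂, [e₃,e₄] = e₄, [e₄,e₅] = e₄, and [e₁,e₂] = [e₁,e₅] = [e₂,e₃] = [e₂,e₄] = [e₃,e₅] = 0. -/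

import Mathlib

/-
All five fields are affine, `X p = A p + b`, so `DX` is the constant matrix `A`; the bracket of
`p ↦ A p + b` and `p ↦ B p + c` is again affine, with linear part `BA − AB` and constant part
`Bb − Ac`. The bracket relations thus become identities between explicit `4 × 4` matrices.
-/

namespace Model2e3c4m

/-- Lie bracket of vector fields on `ℝ⁴`, `[X,Y](p) = DY(p)(X(p)) − DX(p)(Y(p))`. -/
noncomputable def lieBracket (X Y : (Fin 4 → ℝ) → Fin 4 → ℝ) :
    (Fin 4 → ℝ) → Fin 4 → ℝ :=
  fun p => fderiv ℝ Y p (X p) - fderiv ℝ X p (Y p)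

/-- Tangency of a vector field `X` on `ℝ⁴ ∋ (x,y,u,v)` to the graph
`S = {(x, y, F(x,y), G(x,y))}`. -/
def TangentToGraph (F G : ℝ × ℝ → ℝ) (X : (Fin 4 → ℝ) → Fin 4 → ℝ) : Prop :=
  ∀ p : ℝ × ℝ,
    X ![p.1, p.2, F p, G p] 2
        = fderiv ℝ F p (1, 0) * X ![p.1, p.2, F p, G p] 0
          + fderiv ℝ F p (0, 1) * X ![p.1, p.2, F p, G p] 1 ∧
    X ![p.1, p.2, F p, G p] 3
        = fderiv ℝ G p (1, 0) * X ![p.1, p.2, F p, G p] 0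
          + fderiv ℝ G p (0, 1) * X ![p.1, p.2, F p, G p] 1

/-- `u = xy`. -/
noncomputable def F : ℝ × ℝ → ℝ := fun p => p.1 * p.2
/-- `v = x²`. -/
noncomputable def G : ℝ × ℝ → ℝ := fun p => p.1 ^ 2

/-- `e₁ = ∂x + y∂u + 2x∂v`. -/
noncomputable def e₁ : (Fin 4 → ℝ) → Fin 4 → ℝ := fun p => ![1, 0, p 1, 2 * p 0]
/-- `e₂ = ∂y + x∂u`. -/
noncomputable def e₂ : (Fin 4 → ℝ) → Fin 4 → ℝ := fun p => ![0, 1, p 0, 0]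
/-- `e₃ = x∂x + u∂u + 2v∂v`. -/
noncomputable def e₃ : (Fin 4 → ℝ) → Fin 4 → ℝ := fun p => ![p 0, 0, p 2, 2 * p 3]
/-- `e₄ = x∂y + v∂u`. -/
noncomputable def e₄ : (Fin 4 → ℝ) → Fin 4 → ℝ := fun p => ![0, p 0, p 3, 0]
/-- `e₅ = y∂y + u∂u`. -/
noncomputable def e₅ : (Fin 4 → ℝ) → Fin 4 → ℝ := fun p => ![0, p 1, p 2, 0]

open Matrix

section AffineField

variable {n : ℕ}

def affineField (A : Matrix (Fin n) (Fin n) ℝ) (b : Fin n → ℝ) : (Fin n → ℝ) → Fin n → ℝ :=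
  fun p => A *ᵥ p + b

theorem affineField_zero : affineField (0 : Matrix (Fin n) (Fin n) ℝ) 0 = 0 := by
  funext p
  simp [affineField]

theorem fderiv_affineField (A : Matrix (Fin n) (Fin n) ℝ) (b p : Fin n → ℝ) :
    fderiv ℝ (affineField A b) p = LinearMap.toContinuousLinearMap (toLin' A) :=
  ((LinearMap.toContinuousLinearMap (toLin' A)).hasFDerivAt.add_const b).fderiv

end AffineField

theorem lieBracket_affineField (A B : Matrix (Fin 4) (Fin 4) ℝ) (b c : Fin 4 → ℝ) :
    lieBracket (affineField A b) (affineField B c) =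
      affineField (B * A - A * B) (B *ᵥ b - A *ᵥ c) := by
  funext p
  simp only [lieBracket, fderiv_affineField, LinearMap.coe_toContinuousLinearMap', toLin'_apply,
    affineField, mulVec_add, mulVec_mulVec, sub_mulVec]
  abel

theorem e₁_eq : e₁ = affineField !![0, 0, 0, 0; 0, 0, 0, 0; 0, 1, 0, 0; 2, 0, 0, 0]
    ![1, 0, 0, 0] := by
  funext p i
  fin_cases i <;> simp [e₁, affineField, dotProduct, Fin.sum_univ_four]

theorem e₂_eq : e₂ = affineField !![0, 0, 0, 0; 0, 0, 0, 0; 1, 0, 0, 0; 0, 0, 0, 0]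
    ![0, 1, 0, 0] := by
  funext p i
  fin_cases i <;> simp [e₂, affineField, dotProduct, Fin.sum_univ_four]

theorem e₃_eq : e₃ = affineField !![1, 0, 0, 0; 0, 0, 0, 0; 0, 0, 1, 0; 0, 0, 0, 2] 0 := by
  funext p i
  fin_cases i <;> simp [e₃, affineField, dotProduct, Fin.sum_univ_four]

theorem e₄_eq : e₄ = affineField !![0, 0, 0, 0; 1, 0, 0, 0; 0, 0, 0, 1; 0, 0, 0, 0] 0 := by
  funext p i
  fin_cases i <;> simp [e₄, affineField, dotProduct, Fin.sum_univ_four]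

theorem e₅_eq : e₅ = affineField !![0, 0, 0, 0; 0, 1, 0, 0; 0, 0, 1, 0; 0, 0, 0, 0] 0 := by
  funext p i
  fin_cases i <;> simp [e₅, affineField, dotProduct, Fin.sum_univ_four]

theorem fderiv_F_apply (p w : ℝ × ℝ) : fderiv ℝ F p w = p.1 * w.2 + p.2 * w.1 := by
  have hF : HasFDerivAt F _ p :=
    (hasFDerivAt_fst (𝕜 := ℝ) (p := p)).mul (hasFDerivAt_snd (𝕜 := ℝ) (p := p))
  rw [hF.fderiv]
  simp [smul_eq_mul]

theorem fderiv_G_apply (p w : ℝ × ℝ) : fderiv ℝ G p w = 2 * p.1 * w.1 := by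
  have hG : HasFDerivAt G _ p := (hasFDerivAt_fst (𝕜 := ℝ) (p := p)).pow 2
  rw [hG.fderiv]
  simp [smul_eq_mul]

theorem tangentToGraph_F_G_iff (X : (Fin 4 → ℝ) → Fin 4 → ℝ) :
    TangentToGraph F G X ↔ ∀ x y : ℝ,
      X ![x, y, x * y, x ^ 2] 2 = y * X ![x, y, x * y, x ^ 2] 0 + x * X ![x, y, x * y, x ^ 2] 1 ∧
      X ![x, y, x * y, x ^ 2] 3 = 2 * x * X ![x, y, x * y, x ^ 2] 0 := by
  simp only [TangentToGraph, fderiv_F_apply, fderiv_G_apply, Prod.forall]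
  simp [F, G]

/-- **Model 2e3c4m:** the surface `{u = xy, v = x²}` is affinely homogeneous, with the
five tangent affine vector fields `e₁, …, e₅` satisfying the stated bracket relations. -/
theorem model_2e3c4m :
    (TangentToGraph F G e₁ ∧ TangentToGraph F G e₂ ∧ TangentToGraph F G e₃ ∧
      TangentToGraph F G e₄ ∧ TangentToGraph F G e₅) ∧
    (∀ p : ℝ × ℝ,
      e₁ ![p.1, p.2, F p, G p] 0 = 1 ∧ e₁ ![p.1, p.2, F p, G p] 1 = 0 ∧
      e₂ ![p.1, p.2, F p, G p] 0 = 0 ∧ e₂ ![p.1, p.2, F p, G p] 1 = 1 ∧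
      LinearIndependent ℝ
        ![((e₁ ![p.1, p.2, F p, G p] 0, e₁ ![p.1, p.2, F p, G p] 1) : ℝ × ℝ),
          ((e₂ ![p.1, p.2, F p, G p] 0, e₂ ![p.1, p.2, F p, G p] 1) : ℝ × ℝ)]) ∧
    (lieBracket e₁ e₃ = e₁ ∧ lieBracket e₁ e₄ = e₂ ∧ lieBracket e₂ e₅ = e₂ ∧
      lieBracket e₃ e₄ = e₄ ∧ lieBracket e₄ e₅ = e₄ ∧
      lieBracket e₁ e₂ = 0 ∧ lieBracket e₁ e₅ = 0 ∧ lieBracket e₂ e₃ = 0 ∧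
      lieBracket e₂ e₄ = 0 ∧ lieBracket e₃ e₅ = 0) := by
  refine ⟨?tangent, fun p => ⟨rfl, rfl, rfl, rfl, ?independent⟩, ?brackets⟩
  case tangent =>
    simp only [tangentToGraph_F_G_iff]
    refine ⟨?_, ?_, ?_, ?_, ?_⟩ <;> intro x y <;> constructor <;>
      simp [e₁, e₂, e₃, e₄, e₅] <;> ring
  case independent =>
    exact LinearIndependent.pair_iff.2 fun s t h => by simpa [e₁, e₂] using h
  case brackets =>
    simp only [e₁_eq, e₂_eq, e₃_eq, e₄_eq, e₅_eq, lieBracket_affineField, ← affineField_zero]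
    refine ⟨?_, ?_, ?_, ?_, ?_, ?_, ?_, ?_, ?_, ?_⟩ <;> congr 1 <;>
      norm_num [cons_mul, vecMul_cons, ← Matrix.ext_iff, Fin.forall_fin_succ, funext_iff]

end Model2e3c4m
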